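/- arXiv:1404.1398 — 6 statements merged into one kernel-verified Lean document; each statement's English description precedes it below -/
import Mathlib

section
/- Let X be a Type I space and A ⊆ X be unbounded. Then A is a predirection in X if and only if the closure of A is a direction in X. -/
open Set Topology

noncomputable section

universe u

/-- The ordinal ω₁. -/
def omega1 : Ordinal.{0} := (Cardinal.aleph 1).ord

theorem omega1_pos : (0 : Ordinal.{0}) < omega1 := by
  have := Cardinal.ord_lt_ord.mpr (Cardinal.aleph_pos 1)
  simpa [omega1, Cardinal.ord_zero] using this

theorem omega1_isLimit : Order.IsSuccLimit omega1 :=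
  Cardinal.isSuccLimit_ord (Cardinal.aleph0_le_aleph 1)

/-- ω₁ as a type (the set of countable ordinals). -/
def W : Type 1 := {a : Ordinal.{0} // a < omega1}

instance : LinearOrder W := by unfold W; infer_instance
instance : TopologicalSpace W := Preorder.topology W
instance : OrderTopology W := ⟨rfl⟩

def w0 : W := ⟨0, omega1_pos⟩
def Wsucc (a : W) : W := ⟨Order.succ a.1, omega1_isLimit.succ_lt a.2⟩

/-- The closed long ray: ω₁ × [0,1) with the lexicographic order topology. -/
def LongRay : Type 1 := W ×ₗ ↥(Set.Ico (0:ℝ) 1)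

instance : LinearOrder LongRay := by unfold LongRay; infer_instance
instance : TopologicalSpace LongRay := Preorder.topology LongRay
instance : OrderTopology LongRay := ⟨rfl⟩

/-- Embedding of ω₁ into the long ray as the points (α, 0). -/
def iW (a : W) : LongRay := toLex (a, ⟨0, le_rfl, one_pos⟩)
def lrZero : LongRay := iW w0

/-- A subset of ω₁ is unbounded. -/
def WUnbounded (S : Set W) : Prop := ∀ a : W, ∃ b ∈ S, a < b
/-- A subset of ω₁ is closed (in the order sense). -/
def WClosed (S : Set W) : Prop :=
  ∀ a : W, (∃ b, b < a) → (∀ b, b < a → ∃ c ∈ S, b < c ∧ c < a) → a ∈ S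
def WClub (S : Set W) : Prop := WClosed S ∧ WUnbounded S
def WStationary (A : Set W) : Prop := ∀ C : Set W, WClub C → (A ∩ C).Nonempty

/-- A Type I space structure on `X`. -/
structure TypeI (X : Type u) [TopologicalSpace X] where
  seq : W → Set X
  isOpen : ∀ a, IsOpen (seq a)
  lindelof : ∀ a, IsLindelof (closure (seq a))
  mono : ∀ a b : W, a < b → closure (seq a) ⊆ seq b
  covers : ∀ x : X, ∃ a, x ∈ seq a

variable {X : Type u} [TopologicalSpace X]

/-- A subset is bounded if contained in some `X_α`. -/
def TypeI.Bdd (hT : TypeI X) (A : Set X) : Prop := ∃ a, A ⊆ hT.seq a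
/-- Club: closed and unbounded. -/
def TypeI.Club (hT : TypeI X) (A : Set X) : Prop := IsClosed A ∧ ¬ hT.Bdd A
/-- A predirection: an unbounded set such that any function unbounded on it is
unbounded on every unbounded subset of it. -/
def TypeI.Predirection (hT : TypeI X) (D : Set X) : Prop :=
  ¬ hT.Bdd D ∧ ∀ f : X → LongRay, Continuous f → ¬ BddAbove (f '' D) →
    ∀ A ⊆ D, ¬ hT.Bdd A → ¬ BddAbove (f '' A)
/-- A direction: a closed predirection. -/
def TypeI.IsDirection (hT : TypeI X) (D : Set X) : Prop := IsClosed D ∧ hT.Predirection D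
/-- The bones. -/
def TypeI.bone (hT : TypeI X) (a : W) : Set X := closure (hT.seq a) \ hT.seq a
/-- The sequence is canonical. -/
def TypeI.Canonical (hT : TypeI X) : Prop :=
  ∀ a : W, Order.IsSuccLimit a.1 → hT.seq a = ⋃ b ∈ {b : W | b < a}, hT.seq b
/-- A slicer. -/
def TypeI.Slicer (hT : TypeI X) (s : X → LongRay) : Prop :=
  Continuous s ∧ ∀ a : W, ∀ x ∈ closure (hT.seq (Wsucc a)) \ hT.seq a,
    s x ∈ Set.Icc (iW a) (iW (Wsucc a))

/-- ω-bounded: closures of countable sets are compact. -/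
def OmegaBounded (X : Type u) [TopologicalSpace X] : Prop :=
  ∀ S : Set X, S.Countable → IsCompact (closure S)
/-- ω₁-compact: no uncountable closed discrete subset. -/
def Omega1Compact (X : Type u) [TopologicalSpace X] : Prop :=
  ∀ C : Set X, IsClosed C → DiscreteTopology C → C.Countable
/-- Countably tight. -/
def CountablyTight (X : Type u) [TopologicalSpace X] : Prop :=
  ∀ (A : Set X) (x : X), x ∈ closure A → ∃ B ⊆ A, B.Countable ∧ x ∈ closure B



lemma wsucc_lt' (a : W) : a < Wsucc a := by
  show a.1 < Order.succ a.1
  exact Order.lt_succ a.1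

lemma longRay_exists_gt (c : LongRay) : ∃ c' : LongRay, c < c' := by
  refine ⟨toLex (Wsucc (ofLex c).1, ⟨0, le_rfl, one_pos⟩), ?_⟩
  exact Prod.Lex.lt_iff.mpr (Or.inl (wsucc_lt' _))

/-- A is a predirection in X iff the closure of A is a direction in X. -/
theorem stmt_1 {X : Type u} [TopologicalSpace X] [T2Space X] (hT : TypeI X) (A : Set X)
    (hA : ¬ hT.Bdd A) :
    hT.Predirection A ↔ hT.IsDirection (closure A) := by
  have hclA : ¬ hT.Bdd (closure A) := by
    rintro ⟨a, h⟩
    exact hA ⟨a, subset_closure.trans h⟩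
  constructor
  · rintro ⟨-, hP⟩
    refine ⟨isClosed_closure, hclA, ?_⟩
    intro f hf hfub B hBsub hBub hBbdd
    have hfA : ¬ BddAbove (f '' A) := by
      rintro ⟨c, hc⟩
      apply hfub
      refine ⟨c, ?_⟩
      rintro y ⟨x, hx, rfl⟩
      have h1 : f x ∈ closure (f '' A) :=
        image_closure_subset_closure_image hf ⟨x, hx, rfl⟩
      have h2 : closure (f '' A) ⊆ Iic c :=
        closure_minimal (fun y hy => hc hy) isClosed_Iic
      exact h2 h1
    obtain ⟨c, hc⟩ := hBbdd
    obtain ⟨c', hcc'⟩ := longRay_exists_gt c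
    set U := f ⁻¹' (Iio c') with hU
    have hUopen : IsOpen U := isOpen_Iio.preimage hf
    have hBcl : B ⊆ closure (A ∩ U) := by
      intro b hb
      have hbU : b ∈ U := by
        have : f b ≤ c := hc ⟨b, hb, rfl⟩
        exact lt_of_le_of_lt this hcc'
      have := hUopen.inter_closure ⟨hbU, hBsub hb⟩
      rwa [inter_comm] at this
    have hA'ub : ¬ hT.Bdd (A ∩ U) := by
      rintro ⟨a, ha⟩
      apply hBub
      refine ⟨Wsucc a, fun b hb => ?_⟩
      exact hT.mono a (Wsucc a) (wsucc_lt' a)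
        ((closure_mono ha) (hBcl hb))
    have hbdd : BddAbove (f '' (A ∩ U)) := by
      refine ⟨c', ?_⟩
      rintro y ⟨x, ⟨-, hx⟩, rfl⟩
      exact le_of_lt hx
    exact hP f hf hfA (A ∩ U) inter_subset_left hA'ub hbdd
  · rintro ⟨-, -, hP⟩
    refine ⟨hA, ?_⟩
    intro f hf hfub B hBA hBub
    refine hP f hf (fun hb => hfub (hb.mono (image_mono subset_closure))) B
      (hBA.trans subset_closure) hBub

end
end

section
/- Let X be a Type I space and D ⊆ X closed and unbounded. Then the following are equivalent: (a) D is a direction in X; (b) for every continuous f : X → L≥0, either f is bounded on D, or for every α < ω₁ the set f⁻¹([0,α]) ∩ D is bounded; (c) there is no continuous f : X → L≥0 with f unbounded on D and f⁻¹({0}) ∩ D unbounded. -/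
open Set Topology

noncomputable section

universe u

variable {X : Type u} [TopologicalSpace X]

namespace Stmt2Aux

lemma lr_le_iff (x y : W × ↥(Set.Ico (0:ℝ) 1)) :
    (toLex x : LongRay) ≤ toLex y ↔ x.1 < y.1 ∨ x.1 = y.1 ∧ x.2 ≤ y.2 := Prod.Lex.toLex_le_toLex

lemma lr_lt_iff (x y : W × ↥(Set.Ico (0:ℝ) 1)) :
    (toLex x : LongRay) < toLex y ↔ x.1 < y.1 ∨ x.1 = y.1 ∧ x.2 < y.2 := Prod.Lex.toLex_lt_toLex

lemma W_lt_iff (a b : W) : a < b ↔ a.1 < b.1 := Subtype.coe_lt_coe.symm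

lemma I01_le_iff (s t : ↥(Set.Ico (0:ℝ) 1)) : s ≤ t ↔ s.1 ≤ t.1 := Subtype.coe_le_coe.symm
lemma I01_lt_iff (s t : ↥(Set.Ico (0:ℝ) 1)) : s < t ↔ s.1 < t.1 := Subtype.coe_lt_coe.symm

lemma lrZero_le (z : LongRay) : lrZero ≤ z := by
  show (toLex (w0, ⟨0, le_rfl, one_pos⟩) : LongRay) ≤ toLex (ofLex z)
  rcases eq_or_lt_of_le (zero_le : (0 : Ordinal) ≤ (ofLex z).1.1) with h | h
  · exact (lr_le_iff _ _).2 (Or.inr ⟨Subtype.ext h, (I01_le_iff _ _).2 (ofLex z).2.2.1⟩)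
  · exact (lr_le_iff _ _).2 (Or.inl ((W_lt_iff _ _).2 h))

instance : DenselyOrdered LongRay := ⟨fun x y hxy => by
  have hxy' : (toLex (ofLex x) : LongRay) < toLex (ofLex y) := hxy
  rcases (lr_lt_iff _ _).1 hxy' with h | ⟨h1, h2⟩
  · obtain ⟨u, hu1, hu2⟩ := exists_between ((ofLex x).2.2.2 : ((ofLex x).2 : ℝ) < 1)
    refine ⟨toLex ((ofLex x).1, ⟨u, le_trans (ofLex x).2.2.1 hu1.le, hu2⟩), ?_, ?_⟩
    · exact (lr_lt_iff _ _).2 (Or.inr ⟨rfl, (I01_lt_iff _ _).2 hu1⟩)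
    · exact (lr_lt_iff _ _).2 (Or.inl h)
  · obtain ⟨u, hu1, hu2⟩ := exists_between ((I01_lt_iff _ _).1 h2)
    refine ⟨toLex ((ofLex x).1, ⟨u, le_trans (ofLex x).2.2.1 hu1.le,
        lt_trans hu2 (ofLex y).2.2.2⟩), ?_, ?_⟩
    · exact (lr_lt_iff _ _).2 (Or.inr ⟨rfl, (I01_lt_iff _ _).2 hu1⟩)
    · exact (lr_lt_iff _ _).2 (Or.inr ⟨h1, (I01_lt_iff _ _).2 hu2⟩)⟩

/-- Collapse `[0, iW a]` to `lrZero`, shifting everything above down by `a`. -/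
def collapse (a : W) (y : LongRay) : LongRay :=
  if (ofLex y).1.1 < a.1 then lrZero
  else toLex (⟨(ofLex y).1.1 - a.1,
    lt_of_le_of_lt (Ordinal.sub_le_self _ _) (ofLex y).1.2⟩, (ofLex y).2)

lemma collapse_of_lt {a : W} {y : LongRay} (h : (ofLex y).1.1 < a.1) :
    collapse a y = lrZero := if_pos h

lemma collapse_of_ge {a : W} {y : LongRay} (h : ¬ (ofLex y).1.1 < a.1) :
    collapse a y = toLex (⟨(ofLex y).1.1 - a.1,
      lt_of_le_of_lt (Ordinal.sub_le_self _ _) (ofLex y).1.2⟩, (ofLex y).2) := if_neg h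

lemma collapse_mono (a : W) : Monotone (collapse a) := by
  intro y y' hle
  by_cases h1 : (ofLex y).1.1 < a.1
  · rw [collapse_of_lt h1]; exact lrZero_le _
  · have hle' := (lr_le_iff (ofLex y) (ofLex y')).1 hle
    have h2 : ¬ (ofLex y').1.1 < a.1 := by
      rcases hle' with h | ⟨h, -⟩
      · exact fun hc => h1 (lt_trans ((W_lt_iff _ _).1 h) hc)
      · exact fun hc => h1 (by rw [congrArg Subtype.val h]; exact hc)
    rw [collapse_of_ge h1, collapse_of_ge h2]
    refine (lr_le_iff _ _).2 ?_
    rcases hle' with h | ⟨h, ht⟩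
    · left
      refine (W_lt_iff _ _).2 ?_
      have key : a.1 + ((ofLex y).1.1 - a.1) < a.1 + ((ofLex y').1.1 - a.1) := by
        rw [Ordinal.add_sub_cancel_of_le (le_of_not_gt h1),
          Ordinal.add_sub_cancel_of_le (le_of_not_gt h2)]
        exact (W_lt_iff _ _).1 h
      exact (add_lt_add_iff_left a.1).1 key
    · exact Or.inr ⟨Subtype.ext (show (ofLex y).1.1 - a.1 = (ofLex y').1.1 - a.1 by
        rw [congrArg Subtype.val h]), ht⟩

lemma collapse_surj (a : W) : Function.Surjective (collapse a) := by
  intro z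
  have hlt : a.1 + (ofLex z).1.1 < omega1 :=
    Ordinal.isPrincipal_add_ord (Cardinal.aleph0_le_aleph 1) a.2 (ofLex z).1.2
  refine ⟨toLex (⟨a.1 + (ofLex z).1.1, hlt⟩, (ofLex z).2), ?_⟩
  refine (collapse_of_ge (a := a) (y := toLex (⟨a.1 + (ofLex z).1.1, hlt⟩, (ofLex z).2))
    (not_lt.2 (le_self_add : a.1 ≤ a.1 + (ofLex z).1.1))).trans ?_
  exact congrArg toLex (Prod.ext_iff.2 ⟨Subtype.ext (Ordinal.add_sub_cancel _ _), rfl⟩)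

lemma collapse_continuous (a : W) : Continuous (collapse a) :=
  (collapse_mono a).continuous_of_surjective (collapse_surj a)

lemma collapse_eq_zero {a : W} {y : LongRay} (h : y ≤ iW a) : collapse a y = lrZero := by
  rcases (lr_le_iff (ofLex y) (ofLex (iW a))).1 h with h1 | ⟨h1, h2⟩
  · exact collapse_of_lt ((W_lt_iff _ _).1 h1)
  · have hv : (ofLex y).1.1 = a.1 := congrArg Subtype.val h1
    rw [collapse_of_ge (by rw [hv]; exact lt_irrefl _)]
    refine congrArg toLex (Prod.ext_iff.2 ⟨Subtype.ext ?_, Subtype.ext ?_⟩)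
    · show (ofLex y).1.1 - a.1 = (0 : Ordinal)
      rw [hv]; exact Ordinal.sub_self _
    · exact le_antisymm ((I01_le_iff _ _).1 h2) (ofLex y).2.2.1

def shiftW (a : W) (z : LongRay) : LongRay :=
  toLex (⟨a.1 + (ofLex z).1.1,
    Ordinal.isPrincipal_add_ord (Cardinal.aleph0_le_aleph 1) a.2 (ofLex z).1.2⟩, (ofLex z).2)

lemma shiftW_mono (a : W) : Monotone (shiftW a) := by
  intro z z' h
  rcases (lr_le_iff (ofLex z) (ofLex z')).1 h with h1 | ⟨h1, h2⟩
  · exact (lr_le_iff _ _).2 (Or.inl ((W_lt_iff _ _).2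
      ((add_lt_add_iff_left a.1).2 ((W_lt_iff _ _).1 h1))))
  · exact (lr_le_iff _ _).2 (Or.inr
      ⟨Subtype.ext (show a.1 + (ofLex z).1.1 = a.1 + (ofLex z').1.1 by
        rw [congrArg Subtype.val h1]), h2⟩)

lemma le_shift_collapse (a : W) (y : LongRay) : y ≤ shiftW a (collapse a y) := by
  by_cases h : (ofLex y).1.1 < a.1
  · rw [collapse_of_lt h]
    show (toLex (ofLex y) : LongRay) ≤ _
    refine (lr_le_iff _ _).2 (Or.inl ((W_lt_iff _ _).2 ?_))
    show (ofLex y).1.1 < a.1 + (ofLex lrZero).1.1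
    have : (ofLex lrZero).1.1 = 0 := rfl
    rw [this, add_zero]
    exact h
  · rw [collapse_of_ge h]
    refine le_of_eq ?_
    show (toLex (ofLex y) : LongRay) = _
    exact congrArg toLex (Prod.ext_iff.2
      ⟨Subtype.ext (Ordinal.add_sub_cancel_of_le (le_of_not_gt h)).symm, rfl⟩)

lemma le_iW_succ (z : LongRay) : z ≤ iW (Wsucc (ofLex z).1) := by
  show (toLex (ofLex z) : LongRay) ≤ _
  exact (lr_le_iff _ _).2 (Or.inl ((W_lt_iff _ _).2 (Order.lt_succ _)))

end Stmt2Aux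

open Stmt2Aux in
/-- Equivalent characterizations of directions. -/
theorem stmt_2 {X : Type u} [TopologicalSpace X] [T2Space X] (hT : TypeI X) (D : Set X)
    (hDc : IsClosed D) (hDu : ¬ hT.Bdd D) :
    (hT.IsDirection D ↔
      ∀ f : X → LongRay, Continuous f →
        BddAbove (f '' D) ∨ ∀ a : W, hT.Bdd (D ∩ f ⁻¹' Set.Iic (iW a))) ∧
    ((∀ f : X → LongRay, Continuous f →
        BddAbove (f '' D) ∨ ∀ a : W, hT.Bdd (D ∩ f ⁻¹' Set.Iic (iW a))) ↔
      ¬ ∃ f : X → LongRay, Continuous f ∧ ¬ BddAbove (f '' D) ∧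
        ¬ hT.Bdd (D ∩ f ⁻¹' {lrZero})) := by
  constructor
  · constructor
    · rintro ⟨-, -, hmain⟩ f hf
      by_cases hb : BddAbove (f '' D)
      · exact Or.inl hb
      · refine Or.inr fun a => ?_
        by_contra hA
        refine hmain f hf hb (D ∩ f ⁻¹' Set.Iic (iW a)) inter_subset_left hA
          ⟨iW a, ?_⟩
        rintro _ ⟨x, hx, rfl⟩
        exact hx.2
    · intro h
      refine ⟨hDc, hDu, fun f hf hfD A hAD hAb hBdd => ?_⟩
      obtain ⟨c, hc⟩ := hBdd
      rcases h f hf with hb | h2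
      · exact hfD hb
      · obtain ⟨α, hα⟩ := h2 (Wsucc (ofLex c).1)
        refine hAb ⟨α, fun x hx => hα ⟨hAD hx, ?_⟩⟩
        exact le_trans (hc (mem_image_of_mem f hx)) (le_iW_succ c)
  · constructor
    · rintro h ⟨f, hf, hfu, hfz⟩
      rcases h f hf with hb | h2
      · exact hfu hb
      · obtain ⟨α, hα⟩ := h2 w0
        refine hfz ⟨α, fun x hx => hα ⟨hx.1, ?_⟩⟩
        exact le_of_eq (mem_singleton_iff.1 hx.2)
    · intro h f hf
      by_cases hb : BddAbove (f '' D)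
      · exact Or.inl hb
      refine Or.inr fun a => ?_
      by_contra hA
      refine h ⟨collapse a ∘ f, (collapse_continuous a).comp hf, ?_, ?_⟩
      · rintro ⟨c, hc⟩
        refine hb ⟨shiftW a c, ?_⟩
        rintro _ ⟨x, hx, rfl⟩
        calc f x ≤ shiftW a (collapse a (f x)) := le_shift_collapse a (f x)
          _ ≤ shiftW a c := shiftW_mono a (hc (mem_image_of_mem _ hx))
      · intro hbdd
        obtain ⟨α, hα⟩ := hbdd
        refine hA ⟨α, fun x hx => hα ⟨hx.1, ?_⟩⟩
        show (collapse a ∘ f) x ∈ ({lrZero} : Set LongRay)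
        exact collapse_eq_zero hx.2

end
end

section
/- A Type I space X is countably compact if and only if X is ω-bounded (the closure of every countable subset is compact). -/
open Set Topology

noncomputable section

universe u

variable {X : Type u} [TopologicalSpace X]

/-- Countable compactness: every countable open cover has a finite subcover. -/
def CountablyCompact (X : Type u) [TopologicalSpace X] : Prop :=
  ∀ U : ℕ → Set X, (∀ n, IsOpen (U n)) → (⋃ n, U n) = Set.univ →
    ∃ t : Finset ℕ, (⋃ n ∈ t, U n) = Set.univ

/-- A countable subset of ω₁ is bounded. -/
theorem W_countable_bounded (T : Set W) (hTc : T.Countable) :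
    ∃ b : W, ∀ c ∈ T, c < b := by
  rcases T.eq_empty_or_nonempty with h | h
  · exact ⟨w0, by simp [h]⟩
  obtain ⟨f, hf⟩ := hTc.exists_eq_range h
  set g : ℕ → Ordinal.{0} := fun n => Order.succ (f n).1 with hg
  have hsup : iSup g < omega1 := by
    apply Cardinal.iSup_lt_ord_of_isRegular Cardinal.isRegular_aleph_one
    · simpa using Cardinal.aleph0_lt_aleph_one
    · intro n
      exact omega1_isLimit.succ_lt (f n).2
  refine ⟨⟨iSup g, hsup⟩, ?_⟩
  rintro c hc
  rw [hf] at hc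
  obtain ⟨n, rfl⟩ := hc
  have h1 : (f n).1 < g n := Order.lt_succ _
  exact h1.trans_le (Ordinal.le_iSup g n)

/-- A closed Lindelöf subset of a countably compact space is compact. -/
theorem isCompact_of_lindelof_closed {X : Type u} [TopologicalSpace X]
    (hcc : CountablyCompact X) {C : Set X} (hL : IsLindelof C) (hCl : IsClosed C) :
    IsCompact C := by
  classical
  apply isCompact_of_finite_subcover
  intro ι U hUo hCU
  obtain ⟨r, hrc, hrU⟩ := hL.elim_countable_subcover U hUo hCU
  rcases r.eq_empty_or_nonempty with h | h
  · refine ⟨∅, ?_⟩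
    simpa [h] using hrU
  obtain ⟨g, hg⟩ := hrc.exists_eq_range h
  set V : ℕ → Set X := fun n => Nat.rec Cᶜ (fun k _ => U (g k)) n with hV
  have hVo : ∀ n, IsOpen (V n) := by
    intro n
    cases n with
    | zero => exact hCl.isOpen_compl
    | succ k => exact hUo (g k)
  have hVcov : (⋃ n, V n) = Set.univ := by
    apply Set.eq_univ_of_forall
    intro x
    by_cases hx : x ∈ C
    · have := hrU hx
      rw [hg] at this
      simp only [Set.mem_iUnion, Set.mem_range] at this
      obtain ⟨i, ⟨k, rfl⟩, hxi⟩ := this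
      exact Set.mem_iUnion.2 ⟨k + 1, hxi⟩
    · exact Set.mem_iUnion.2 ⟨0, hx⟩
  obtain ⟨t, ht⟩ := hcc V hVo hVcov
  refine ⟨(t.erase 0).image (fun n => g (n - 1)), ?_⟩
  intro x hx
  have hxV : x ∈ ⋃ n ∈ t, V n := ht ▸ Set.mem_univ x
  simp only [Set.mem_iUnion] at hxV
  obtain ⟨n, hn, hxn⟩ := hxV
  cases n with
  | zero => exact absurd hx hxn
  | succ k =>
    refine Set.mem_iUnion.2 ⟨g k, Set.mem_iUnion.2 ⟨?_, hxn⟩⟩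
    simp only [Finset.mem_image]
    exact ⟨k + 1, Finset.mem_erase.2 ⟨Nat.succ_ne_zero k, hn⟩, by simp⟩

/-- A Type I space is countably compact iff it is ω-bounded. -/
theorem stmt_3 {X : Type u} [TopologicalSpace X] [T2Space X] (hT : TypeI X) :
    CountablyCompact X ↔ OmegaBounded X := by
  constructor
  · -- countably compact → ω-bounded
    intro hcc S hSc
    -- choose for each x ∈ S an index
    have hch : ∀ x : X, ∃ a : W, x ∈ hT.seq a := hT.covers
    choose a ha using hch
    have hTc : (a '' S).Countable := hSc.image a
    obtain ⟨b, hb⟩ := W_countable_bounded (a '' S) hTc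
    have hSb : S ⊆ hT.seq b := by
      intro x hx
      have : a x < b := hb _ ⟨x, hx, rfl⟩
      exact hT.mono (a x) b this (subset_closure (ha x))
    have hcl : closure S ⊆ closure (hT.seq b) := closure_mono hSb
    have hL : IsLindelof (closure S) :=
      (hT.lindelof b).of_isClosed_subset isClosed_closure hcl
    exact isCompact_of_lindelof_closed hcc hL isClosed_closure
  · -- ω-bounded → countably compact
    intro hob U hUo hUcov
    by_contra h
    push_neg at h
    have hpt : ∀ n : ℕ, ∃ x : X, x ∉ ⋃ k ∈ Finset.range (n + 1), U k := by
      intro n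
      have := h (Finset.range (n + 1))
      rcases Set.ne_univ_iff_exists_notMem _ |>.1 this with ⟨x, hx⟩
      exact ⟨x, hx⟩
    choose x hx using hpt
    have hSc : (Set.range x).Countable := Set.countable_range x
    have hcpt : IsCompact (closure (Set.range x)) := hob _ hSc
    have hsub : closure (Set.range x) ⊆ ⋃ n, U n := by
      rw [hUcov]; exact Set.subset_univ _
    obtain ⟨t, ht⟩ := hcpt.elim_finite_subcover U hUo hsub
    set N := t.sup id with hN
    have hxN : x N ∈ ⋃ n ∈ t, U n := ht (subset_closure (Set.mem_range_self N))
    simp only [Set.mem_iUnion] at hxN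
    obtain ⟨k, hk, hxk⟩ := hxN
    have hkN : k ≤ N := Finset.le_sup (f := id) hk
    exact hx N (Set.mem_iUnion.2 ⟨k, Set.mem_iUnion.2 ⟨Finset.mem_range.2 (Nat.lt_succ_of_le hkN), hxk⟩⟩)

end
end

section
/- Let X be a Type I space with canonical sequence ⟨X_α⟩ and C ⊆ X closed and unbounded. (a) If X is ω₁-compact, then the set of α < ω₁ with C ∩ B_α(X) ≠ ∅ is stationary in ω₁. (b) If X is ω-bounded, then this set is closed and unbounded in ω₁. -/
open Set Topology

noncomputable section

universe u

variable {X : Type u} [TopologicalSpace X]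

section Aux
namespace Stmt4

lemma lt_Wsucc (a : W) : a < Wsucc a := Order.lt_succ a.1

lemma countable_Iio (a : W) : (Set.Iio a.1).Countable := by
  rw [Cardinal.countable_iff_lt_aleph_one, Ordinal.mk_Iio_ordinal, Cardinal.lift_lt_aleph_one]
  exact Cardinal.lt_ord.mp a.2

lemma countable_subtype_lt (a : W) : Countable {v : W // v < a} := by
  have h1 : Countable ↥(Set.Iio a.1) := (countable_Iio a).to_subtype
  exact Function.Injective.countable
    (f := fun v : {v : W // v < a} => (⟨v.1.1, v.2⟩ : ↥(Set.Iio a.1)))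
    (fun v w h => by
      simp only [Subtype.mk.injEq] at h
      exact Subtype.ext (Subtype.ext (Subtype.mk.inj h)))

lemma bdd_of_countable {ι : Type 1} [Countable ι] (g : ι → W) : ∃ b : W, ∀ i, g i < b := by
  rcases isEmpty_or_nonempty ι with h | h
  · exact ⟨w0, fun i => isEmptyElim i⟩
  · obtain ⟨e, he⟩ := exists_surjective_nat ι
    have hsup : (⨆ n, (g (e n)).1) < omega1 := by
      apply Ordinal.iSup_lt_ord _ (fun n => (g (e n)).2)
      rw [show omega1.cof = Cardinal.aleph 1 from Cardinal.isRegular_aleph_one.cof_eq]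
      simpa using Cardinal.aleph0_lt_aleph_one
    refine ⟨⟨Order.succ _, omega1_isLimit.succ_lt hsup⟩, fun i => ?_⟩
    obtain ⟨n, rfl⟩ := he i
    show (g (e n)).1 < Order.succ (⨆ n, (g (e n)).1)
    exact lt_of_le_of_lt (Ordinal.le_iSup (fun n => (g (e n)).1) n) (Order.lt_succ _)

end Stmt4
end Aux
section Aux2
namespace Stmt4

variable {X : Type u} [TopologicalSpace X]

lemma seq_le (hT : TypeI X) {a b : W} (h : a ≤ b) : hT.seq a ⊆ hT.seq b := by
  rcases eq_or_lt_of_le h with rfl | h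
  · exact subset_rfl
  · exact subset_closure.trans (hT.mono _ _ h)

lemma exists_out (hT : TypeI X) {C : Set X} (hC : ¬ hT.Bdd C) (a : W) :
    ∃ x ∈ C, x ∉ closure (hT.seq a) := by
  obtain ⟨x, hx, hxn⟩ : ∃ x ∈ C, x ∉ hT.seq (Wsucc a) := by
    by_contra h; push_neg at h; exact hC ⟨Wsucc a, h⟩
  exact ⟨x, hx, fun hx2 => hxn (hT.mono a (Wsucc a) (lt_Wsucc a) hx2)⟩

lemma exists_seq_gt (hT : TypeI X) (x : X) (a : W) : ∃ b, a < b ∧ x ∈ hT.seq b := by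
  obtain ⟨c, hc⟩ := hT.covers x
  exact ⟨Wsucc (max a c), lt_of_le_of_lt (le_max_left a c) (lt_Wsucc _),
    seq_le hT (le_trans (le_max_right a c) (le_of_lt (lt_Wsucc _))) hc⟩

lemma sup_nat (b : ℕ → W) (hmono : StrictMono b) :
    ∃ L : W, Order.IsSuccLimit L.1 ∧ (∀ n, b n < L) ∧ ∀ d, d < L → ∃ n, d < b n := by
  have hsup : (⨆ n, (b n).1) < omega1 := by
    apply Ordinal.iSup_lt_ord _ (fun n => (b n).2)
    rw [show omega1.cof = Cardinal.aleph 1 from Cardinal.isRegular_aleph_one.cof_eq]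
    simpa using Cardinal.aleph0_lt_aleph_one
  have hlt : ∀ n, (b n).1 < ⨆ n, (b n).1 := fun n =>
    lt_of_lt_of_le (hmono (Nat.lt_succ_self n)) (Ordinal.le_iSup (fun n => (b n).1) (n + 1))
  refine ⟨⟨_, hsup⟩, Ordinal.isSuccLimit_iff.mpr ⟨?_, Order.isSuccPrelimit_of_succ_lt ?_⟩, fun n => hlt n, fun d hd => ?_⟩
  · exact (zero_le.trans_lt (hlt 0)).ne'
  · intro d hd
    obtain ⟨n, hn⟩ := Ordinal.lt_iSup_iff.mp hd
    exact lt_of_le_of_lt (Order.succ_le_of_lt hn) (hlt n)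
  · exact Ordinal.lt_iSup_iff.mp hd

open Filter in
lemma reach_bone (hT : TypeI X) (hcan : hT.Canonical)
    {C : Set X} (hCcl : IsClosed C) (hOB : OmegaBounded X)
    (L : W) (hL : Order.IsSuccLimit L.1) (y : ℕ → X) (c : ℕ → W)
    (hyC : ∀ n, y n ∈ C) (hyL : ∀ n, y n ∈ hT.seq L)
    (hyn : ∀ n, y n ∉ hT.seq (c n))
    (hcof : ∀ b, b < L → ∃ N, ∀ m, N ≤ m → b < c m) :
    (C ∩ hT.bone L).Nonempty := by
  have hK : IsCompact (closure (Set.range y)) := hOB _ (Set.countable_range y)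
  have hle : Filter.map y Filter.atTop ≤ 𝓟 (closure (Set.range y)) := by
    rw [Filter.le_principal_iff]
    exact Filter.mem_map.mpr (Filter.univ_mem' fun n => subset_closure (Set.mem_range_self n))
  obtain ⟨z, hzK, hz⟩ := hK.exists_mapClusterPt hle
  have hrC : Set.range y ⊆ C := Set.range_subset_iff.mpr hyC
  have hrL : Set.range y ⊆ hT.seq L := Set.range_subset_iff.mpr hyL
  have hzC : z ∈ C := (closure_minimal hrC hCcl) hzK
  have hzcl : z ∈ closure (hT.seq L) := (closure_mono hrL) hzK
  refine ⟨z, hzC, hzcl, fun hzL => ?_⟩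
  rw [hcan L hL] at hzL
  simp only [Set.mem_iUnion, Set.mem_setOf_eq] at hzL
  obtain ⟨b, hbL, hzb⟩ := hzL
  obtain ⟨N, hN⟩ := hcof b hbL
  have hfreq := (mapClusterPt_iff_frequently.mp hz) (hT.seq b) ((hT.isOpen b).mem_nhds hzb)
  obtain ⟨m, hm, hym⟩ := Filter.frequently_atTop.mp hfreq N
  exact hyn m (seq_le hT (le_of_lt (hN m hm)) hym)

lemma part_b {X : Type u} [TopologicalSpace X] [T2Space X] (hT : TypeI X)
    (hcan : hT.Canonical) (C : Set X) (hC : hT.Club C) (hOB : OmegaBounded X) :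
    WClub {a : W | (C ∩ hT.bone a).Nonempty} := by
  set A := {a : W | (C ∩ hT.bone a).Nonempty} with hA
  choose pt hptC hptn using exists_out hT hC.2
  choose nx hnx1 hnx2 using fun x a => exists_seq_gt hT x a
  constructor
  · -- WClosed
    intro a h1 h2
    -- a.1 is a limit ordinal
    have halim : Order.IsSuccLimit a.1 := by
      rcases Ordinal.zero_or_succ_or_isSuccLimit a.1 with h0 | ⟨u, hu⟩ | h
      · obtain ⟨b, hb⟩ := h1
        exact absurd (show b.1 < 0 from h0 ▸ hb) (not_lt_of_ge zero_le)
      · have hua : u < a.1 := hu ▸ Order.lt_succ u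
        obtain ⟨c, _, hc1, hc2⟩ := h2 ⟨u, hua.trans a.2⟩ hua
        have hcu : c.1 < Order.succ u := by rw [hu]; exact hc2
        have hc1' : u < c.1 := hc1
        have hle : c.1 ≤ u := Order.lt_succ_iff.mp hcu
        exact absurd hc1' (not_lt.mpr hle)
      · exact h
    have hpos : (0 : Ordinal) < a.1 := pos_iff_ne_zero.mpr halim.ne_zero
    have hcnt : Countable ↥(Set.Iio a.1) := (countable_Iio a).to_subtype
    have hne : Nonempty ↥(Set.Iio a.1) := ⟨⟨0, hpos⟩⟩
    obtain ⟨e, he⟩ := exists_surjective_nat ↥(Set.Iio a.1)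
    have hen : ∀ n, ((⟨(e n).1, (e n).2.trans a.2⟩ : W) : W) < a := fun n => (e n).2
    -- recursive sequence in A below a
    have hstep : ∀ d : {d : W // d ∈ A ∧ d < a}, ∀ n : ℕ,
        ∃ c : W, c ∈ A ∧ (max d.1 ⟨(e n).1, (e n).2.trans a.2⟩ < c) ∧ c < a := by
      intro d n
      obtain ⟨c, hcA, hc1, hc2⟩ := h2 _ (max_lt d.2.2 (hen n))
      exact ⟨c, hcA, hc1, hc2⟩
    obtain ⟨c0, hc0A, _, hc0a⟩ := h2 w0 hpos
    choose F hFA hFlt hFa using hstep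
    let g : ℕ → {d : W // d ∈ A ∧ d < a} := fun n =>
      Nat.rec ⟨c0, hc0A, hc0a⟩ (fun m d => ⟨F d m, hFA d m, hFa d m⟩) n
    have hgsucc : ∀ n, (g (n + 1)).1 = F (g n) n := fun n => rfl
    have hgmono : StrictMono (fun n => (g n).1) := by
      apply strictMono_nat_of_lt_succ
      intro n
      exact lt_of_le_of_lt (le_max_left _ _) (hgsucc n ▸ hFlt (g n) n)
    have hge : ∀ n, (⟨(e n).1, (e n).2.trans a.2⟩ : W) < (g (n+1)).1 := fun n =>
      lt_of_le_of_lt (le_max_right _ _) (hgsucc n ▸ hFlt (g n) n)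
    -- pick points in the bones
    have hpick : ∀ n, ∃ y, y ∈ C ∩ hT.bone (g n).1 := fun n => (g n).2.1
    choose y hy using hpick
    have : (C ∩ hT.bone a).Nonempty := by
      apply reach_bone hT hcan hC.1 hOB a halim y (fun n => (g n).1)
      · exact fun n => (hy n).1
      · exact fun n => hT.mono _ _ (g n).2.2 (hy n).2.1
      · exact fun n => (hy n).2.2
      · intro b hb
        obtain ⟨n, hn⟩ : ∃ n, e n = ⟨b.1, hb⟩ := he ⟨b.1, hb⟩
        refine ⟨n + 1, fun m hm => ?_⟩
        have hb' : b < (g (n+1)).1 := by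
          have := hge n
          rw [hn] at this
          exact this
        exact lt_of_lt_of_le hb' (hgmono.monotone hm)
    exact this
  · -- WUnbounded
    intro a
    let b : ℕ → W := fun n => Nat.rec a (fun _ d => nx (pt d) d) n
    have hbsucc : ∀ n, b (n + 1) = nx (pt (b n)) (b n) := fun n => rfl
    have hbmono : StrictMono b := by
      apply strictMono_nat_of_lt_succ
      intro n
      exact (hbsucc n) ▸ hnx1 (pt (b n)) (b n)
    obtain ⟨L, hLlim, hLgt, hLcof⟩ := sup_nat b hbmono
    refine ⟨L, ?_, ?_⟩
    · apply reach_bone hT hcan hC.1 hOB L hLlim (fun n => pt (b n)) b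
      · exact fun n => hptC (b n)
      · intro n
        have : pt (b n) ∈ hT.seq (b (n+1)) := (hbsucc n) ▸ hnx2 (pt (b n)) (b n)
        exact seq_le hT (le_of_lt (hLgt (n+1))) this
      · exact fun n => fun hmem => hptn (b n) (subset_closure hmem)
      · intro d hd
        obtain ⟨n, hn⟩ := hLcof d hd
        exact ⟨n, fun m hm => lt_of_lt_of_le hn (hbmono.monotone hm)⟩
    · exact show a = b 0 by rfl ▸ hLgt 0

end Stmt4
end Aux2
section Aux3
namespace Stmt4

instance : WellFoundedLT W :=
  ⟨InvImage.wf (fun a : W => a.1) (Ordinal.wellFoundedLT.wf)⟩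

variable {X : Type u} [TopologicalSpace X]

lemma exists_spread (S : Set W) (hS : WUnbounded S) (H : W → W) :
    ∃ f : W → W, ∀ w, f w ∈ S ∧ ∀ v, v < w → H (f v) < f w := by
  have key : ∀ (w : W) (g : ∀ v, v < w → W), ∃ c, c ∈ S ∧ ∀ v (hv : v < w), H (g v hv) < c := by
    intro w g
    haveI := countable_subtype_lt w
    obtain ⟨b, hb⟩ := bdd_of_countable (ι := {v : W // v < w}) (fun v => H (g v.1 v.2))
    obtain ⟨c, hcS, hbc⟩ := hS b
    exact ⟨c, hcS, fun v hv => (hb ⟨v, hv⟩).trans hbc⟩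
  have hwf : WellFounded ((· < ·) : W → W → Prop) := wellFounded_lt
  let f : W → W := hwf.fix (fun w g => (key w g).choose)
  have hfeq : ∀ w, f w = (key w (fun v _ => f v)).choose := fun w => hwf.fix_eq _ w
  refine ⟨f, fun w => ?_⟩
  have h := (key w (fun v _ => f v)).choose_spec
  rw [← hfeq w] at h
  exact h

end Stmt4
end Aux3
section Aux4
namespace Stmt4

variable {X : Type u} [TopologicalSpace X]

lemma part_a {X : Type u} [TopologicalSpace X] [T2Space X] (hT : TypeI X)
    (hcan : hT.Canonical) (C : Set X) (hC : hT.Club C) (hOC : Omega1Compact X) :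
    WStationary {a : W | (C ∩ hT.bone a).Nonempty} := by
  intro S hS
  by_contra hcon
  rw [Set.not_nonempty_iff_eq_empty] at hcon
  have hSA : ∀ a ∈ S, ¬ (C ∩ hT.bone a).Nonempty := fun a haS hne =>
    Set.eq_empty_iff_forall_notMem.mp hcon a ⟨hne, haS⟩
  choose pt hptC hptn using exists_out hT hC.2
  choose nx hnx1 hnx2 using fun a => exists_seq_gt hT (pt a) a
  obtain ⟨f, hf⟩ := exists_spread S hS.2 nx
  have hfS : ∀ w, f w ∈ S := fun w => (hf w).1
  have hfH : ∀ v w, v < w → nx (f v) < f w := fun v w h => (hf w).2 v h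
  have hfmono : StrictMono f := fun v w h => lt_trans (hnx1 (f v)) (hfH v w h)
  set z : W → X := fun w => pt (f w) with hzdef
  have hzC : ∀ w, z w ∈ C := fun w => hptC (f w)
  have hznot : ∀ w, z w ∉ closure (hT.seq (f w)) := fun w => hptn (f w)
  have hzin : ∀ v w, v < w → z v ∈ hT.seq (f w) := fun v w h =>
    seq_le hT (le_of_lt (hfH v w h)) (hnx2 (f v))
  have hzinj : Function.Injective z := by
    intro v w h
    by_contra hne
    rcases lt_or_gt_of_ne hne with hlt | hlt
    · exact hznot w (h ▸ subset_closure (hzin v w hlt))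
    · exact hznot v (h ▸ subset_closure (hzin w v hlt))
  set D := Set.range z with hDdef
  -- localization of closure points
  have hDin : ∀ (w : W) (y : X) (T : Set X), T ⊆ D → y ∈ closure T → y ∈ hT.seq (f w) →
      y ∈ closure (z '' Set.Iio w) := by
    intro w y T hTD hyT hyw
    have h1 : y ∈ closure (hT.seq (f w) ∩ T) := (hT.isOpen (f w)).inter_closure ⟨hyw, hyT⟩
    refine closure_mono ?_ h1
    rintro u ⟨huw, huT⟩
    obtain ⟨v, rfl⟩ := hTD huT
    refine ⟨v, ?_, rfl⟩
    by_contra hvw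
    exact hznot v (subset_closure (seq_le hT (hfmono.monotone (not_lt.mp hvw)) huw))
  -- closure D ⊆ D
  have hclosed : closure D ⊆ D := by
    intro y hyD
    obtain ⟨b, _, hb2⟩ := exists_seq_gt hT y w0
    have hP : ∃ w : W, y ∈ closure (z '' Set.Iio w) := by
      refine ⟨Wsucc b, hDin (Wsucc b) y D subset_rfl hyD ?_⟩
      exact seq_le hT (le_of_lt (lt_of_lt_of_le (lt_Wsucc b) hfmono.le_apply)) hb2
    obtain ⟨w, hw, hmin⟩ := (wellFounded_lt (α := W)).has_min
      {w : W | y ∈ closure (z '' Set.Iio w)} ⟨hP.choose, hP.choose_spec⟩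
    rw [Set.mem_setOf_eq] at hw
    rcases Ordinal.zero_or_succ_or_isSuccLimit w.1 with h0 | ⟨u, hu⟩ | hlim
    · have hem : Set.Iio w = (∅ : Set W) := by
        ext d
        simp only [Set.mem_Iio, Set.mem_empty_iff_false, iff_false]
        intro hd
        exact absurd (show d.1 < 0 from h0 ▸ (hd : d.1 < w.1)) (not_lt_of_ge zero_le)
      rw [hem, Set.image_empty, closure_empty] at hw
      exact absurd hw (Set.notMem_empty y)
    · -- successor case : y = z v ∈ D
      have huW : u < omega1 := lt_trans (hu ▸ Order.lt_succ u) w.2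
      have hvw : (⟨u, huW⟩ : W) < w := by
        show u < w.1
        rw [← hu]; exact Order.lt_succ u
      have hIio : Set.Iio w = insert (show W from ⟨u, huW⟩) (Set.Iio (show W from ⟨u, huW⟩)) := by
        ext d
        simp only [Set.mem_Iio, Set.mem_insert_iff]
        constructor
        · intro hd
          have : d.1 < Order.succ u := by rw [hu]; exact hd
          rcases lt_or_eq_of_le (Order.lt_succ_iff.mp this) with h | h
          · exact Or.inr h
          · exact Or.inl (Subtype.ext h)
        · rintro (rfl | hd)
          · exact hvw
          · exact lt_trans hd hvw
      rw [hIio, Set.image_insert_eq, Set.insert_eq, closure_union, closure_singleton] at hw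
      rcases hw with hw | hw
      · exact hw ▸ Set.mem_range_self _
      · exact absurd hw (fun h => hmin ⟨u, huW⟩ h hvw)
    · -- limit case : contradiction with hSA
      exfalso
      haveI := countable_subtype_lt w
      have hpos : (0 : Ordinal) < w.1 := pos_iff_ne_zero.mpr hlim.ne_zero
      have hne : Nonempty {v : W // v < w} := ⟨⟨w0, hpos⟩⟩
      obtain ⟨e, he⟩ := exists_surjective_nat {v : W // v < w}
      have hsup : (⨆ n, (f (e n).1).1) < omega1 := by
        apply Ordinal.iSup_lt_ord _ (fun n => (f (e n).1).2)
        rw [show omega1.cof = Cardinal.aleph 1 from Cardinal.isRegular_aleph_one.cof_eq]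
        simpa using Cardinal.aleph0_lt_aleph_one
      set lam : Ordinal := ⨆ n, (f (e n).1).1 with hlam
      set L : W := ⟨lam, hsup⟩ with hL
      -- f v < L for v < w
      have hWsucclt : ∀ v : W, v < w → Wsucc v < w := fun v hv => hlim.succ_lt hv
      have hfle : ∀ v : W, v < w → (f v).1 ≤ lam := by
        intro v hv
        obtain ⟨n, hn⟩ := he ⟨v, hv⟩
        have : f (e n).1 = f v := by rw [hn]
        rw [← this]
        exact Ordinal.le_iSup (fun n => (f (e n).1).1) n
      have hfL : ∀ v : W, v < w → f v < L := by
        intro v hv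
        exact lt_of_lt_of_le (hfmono (lt_Wsucc v)) (hfle (Wsucc v) (hWsucclt v hv))
      have hLlim : Order.IsSuccLimit L.1 := by
        refine Ordinal.isSuccLimit_iff.mpr ⟨?_, Order.isSuccPrelimit_of_succ_lt ?_⟩
        · exact (zero_le.trans_lt (show (f w0).1 < L.1 from hfL w0 hpos)).ne'
        · intro d hd
          obtain ⟨n, hn⟩ := Ordinal.lt_iSup_iff.mp hd
          exact lt_of_le_of_lt (Order.succ_le_of_lt hn)
            (hfL (e n).1 (e n).2)
      -- z '' Iio w ⊆ seq L
      have hsubL : z '' Set.Iio w ⊆ hT.seq L := by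
        rintro u ⟨v, hv, rfl⟩
        have h1 : z v ∈ hT.seq (f (Wsucc v)) := hzin v (Wsucc v) (lt_Wsucc v)
        exact seq_le hT (le_of_lt (hfL (Wsucc v) (hWsucclt v hv))) h1
      have hyL : y ∈ closure (hT.seq L) := closure_mono hsubL hw
      have hynot : y ∉ hT.seq L := by
        intro hymem
        rw [hcan L hLlim] at hymem
        simp only [Set.mem_iUnion, Set.mem_setOf_eq] at hymem
        obtain ⟨c, hcL, hyc⟩ := hymem
        obtain ⟨n, hn⟩ := Ordinal.lt_iSup_iff.mp (hcL : c.1 < lam)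
        set v : W := (e n).1 with hv
        have hyfv : y ∈ hT.seq (f v) := seq_le hT (le_of_lt hn) hyc
        have : y ∈ closure (z '' Set.Iio v) :=
          hDin v y (z '' Set.Iio w) (Set.image_subset_range _ _) hw hyfv
        exact hmin v this (e n).2
      have hyC : y ∈ C := by
        have himg : z '' Set.Iio w ⊆ C := by
          rintro u ⟨v, _, rfl⟩; exact hzC v
        exact (closure_minimal himg hC.1) hw
      have hLS : L ∈ S := by
        apply hS.1 L ⟨f w0, hfL w0 hpos⟩
        intro d hd
        obtain ⟨n, hn⟩ := Ordinal.lt_iSup_iff.mp (hd : d.1 < lam)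
        exact ⟨f (e n).1, hfS _, hn, hfL (e n).1 (e n).2⟩
      exact hSA L hLS ⟨y, hyC, hyL, hynot⟩
  -- D is closed discrete
  have hDcl : IsClosed D := isClosed_of_closure_subset hclosed
  have hDdisc : DiscreteTopology ↥D := by
    rw [discreteTopology_subtype_iff]
    intro x hx
    obtain ⟨w, rfl⟩ := hx
    rw [nhdsWithin, inf_assoc, Filter.inf_principal, Filter.inf_principal_eq_bot]
    have hUopen : IsOpen (hT.seq (f (Wsucc w)) \ closure (hT.seq (f w))) :=
      (hT.isOpen _).sdiff isClosed_closure
    have hUmem : z w ∈ hT.seq (f (Wsucc w)) \ closure (hT.seq (f w)) :=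
      ⟨hzin w (Wsucc w) (lt_Wsucc w), hznot w⟩
    apply Filter.mem_of_superset (hUopen.mem_nhds hUmem)
    rintro u ⟨hu1, hu2⟩ ⟨hune, huD⟩
    obtain ⟨v, rfl⟩ := huD
    have hvle : v ≤ w := by
      by_contra hgt
      push_neg at hgt
      have hgt' : w.1 < v.1 := hgt
      have hsle0 : (Wsucc w).1 ≤ v.1 := Order.succ_le_of_lt hgt'
      have hsle : Wsucc w ≤ v := hsle0
      exact hznot v (subset_closure (seq_le hT (hfmono.monotone hsle) hu1))
    rcases lt_or_eq_of_le hvle with hlt | rfl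
    · exact hu2 (subset_closure (hzin v w hlt))
    · exact hune rfl
  have hcnt : D.Countable := hOC D hDcl hDdisc
  have hWcnt : Countable W := by
    haveI : Countable ↥D := hcnt.to_subtype
    exact Function.Injective.countable
      (f := fun w : W => (⟨z w, Set.mem_range_self w⟩ : ↥D))
      (fun v w h => hzinj (congrArg Subtype.val h))
  have h1 : (Cardinal.mk W) = Cardinal.lift.{1} omega1.card := Ordinal.mk_Iio_ordinal omega1
  have h2 : (Cardinal.mk W) ≤ Cardinal.aleph0 := Cardinal.mk_le_aleph0
  rw [h1, show omega1.card = Cardinal.aleph 1 from Cardinal.card_ord _] at h2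
  rw [← Cardinal.lift_aleph0.{1, 0}] at h2
  exact absurd (Cardinal.lift_le.mp h2) (not_le.mpr Cardinal.aleph0_lt_aleph_one)

end Stmt4
end Aux4
/-- Clubs meet the bones stationarily (ω₁-compact case) resp. club-often (ω-bounded case). -/
theorem stmt_4 {X : Type u} [TopologicalSpace X] [T2Space X] (hT : TypeI X)
    (hcan : hT.Canonical) (C : Set X) (hC : hT.Club C) :
    (Omega1Compact X → WStationary {a : W | (C ∩ hT.bone a).Nonempty}) ∧
    (OmegaBounded X → WClub {a : W | (C ∩ hT.bone a).Nonempty}) := by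
  constructor
  · exact fun hOC => Stmt4.part_a hT hcan C hC hOC
  · exact fun hOB => Stmt4.part_b hT hcan C hC hOB

end
end

section
/- Let X be a Type I space in which any two unbounded zero-sets intersect in a closed unbounded set. Then every continuous real-valued function on X is eventually constant, i.e. constant outside some X_α. -/
open Set Topology

noncomputable section

universe u

variable {X : Type u} [TopologicalSpace X]

/-- Any countable (ℕ-indexed) family in W has a strict upper bound. -/
theorem myaux_exists_ub (g : ℕ → W) : ∃ b : W, ∀ n, g n < b := by
  have hsup : iSup (fun n => (g n).1) < omega1 := by
    apply Ordinal.iSup_lt_ord_lift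
    · rw [omega1, Cardinal.isRegular_aleph_one.cof_eq]
      simpa using Cardinal.aleph0_lt_aleph_one
    · exact fun n => (g n).2
  refine ⟨⟨Order.succ _, omega1_isLimit.succ_lt hsup⟩, fun n => ?_⟩
  have : (g n).1 ≤ iSup (fun n => (g n).1) := Ordinal.le_iSup _ n
  exact show (g n).1 < _ from lt_of_le_of_lt this (Order.lt_succ _)

theorem myaux_bdd_mono {X : Type u} [TopologicalSpace X] (hT : TypeI X) {A B : Set X}
    (h : A ⊆ B) (hB : hT.Bdd B) : hT.Bdd A := by
  obtain ⟨a, ha⟩ := hB; exact ⟨a, h.trans ha⟩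

theorem myaux_bdd_iUnion {X : Type u} [TopologicalSpace X] (hT : TypeI X) (s : ℕ → Set X)
    (h : ∀ n, hT.Bdd (s n)) : hT.Bdd (⋃ n, s n) := by
  choose a ha using h
  obtain ⟨b, hb⟩ := myaux_exists_ub a
  refine ⟨b, iUnion_subset fun n => (ha n).trans ?_⟩
  exact subset_closure.trans (hT.mono _ _ (hb n))

/-- Lindelöf-style covering lemma for preimages under `f` of subsets of ℝ. -/
theorem myaux_cover {X : Type u} [TopologicalSpace X] (hT : TypeI X) (f : X → ℝ)
    (F : Set ℝ) (h : ∀ w ∈ F, ∃ ε > 0, hT.Bdd (f ⁻¹' Metric.ball w ε)) :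
    hT.Bdd (f ⁻¹' F) := by
  choose! ε hε hbdd using h
  obtain ⟨T, hTc, hTU⟩ := TopologicalSpace.isOpen_iUnion_countable
    (fun w : F => Metric.ball (w : ℝ) (ε w)) (fun w => Metric.isOpen_ball)
  have hcov : F ⊆ ⋃ w ∈ T, Metric.ball (w : ℝ) (ε w) := by
    rw [hTU]
    intro y hy
    exact mem_iUnion.2 ⟨⟨y, hy⟩, Metric.mem_ball_self (hε y hy)⟩
  rcases T.eq_empty_or_nonempty with rfl | hne
  · simp only [mem_empty_iff_false, iUnion_of_empty, iUnion_empty] at hcov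
    have : f ⁻¹' F = ∅ := by
      rw [eq_empty_iff_forall_notMem]
      exact fun x hx => (hcov hx)
    rw [this]; exact ⟨w0, empty_subset _⟩
  · obtain ⟨e, hT_eq⟩ := hTc.exists_eq_range hne
    have : f ⁻¹' F ⊆ ⋃ n, f ⁻¹' Metric.ball ((e n : ℝ)) (ε (e n)) := by
      intro x hx
      have := hcov hx
      rw [hT_eq] at this
      simp only [mem_iUnion, mem_range] at this
      obtain ⟨w, ⟨n, rfl⟩, hw⟩ := this
      exact mem_iUnion.2 ⟨n, hw⟩
    refine myaux_bdd_mono hT this (myaux_bdd_iUnion hT _ fun n => ?_)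
    exact hbdd _ (e n).2

/-- If any two unbounded zero-sets have club intersection, then every continuous
real-valued function is eventually constant. -/
theorem stmt_16 {X : Type u} [TopologicalSpace X] [T2Space X] (hT : TypeI X)
    (hz : ∀ g₁ g₂ : X → ℝ, Continuous g₁ → Continuous g₂ →
      ¬ hT.Bdd (g₁ ⁻¹' {0}) → ¬ hT.Bdd (g₂ ⁻¹' {0}) →
      hT.Club (g₁ ⁻¹' {0} ∩ g₂ ⁻¹' {0})) :
    ∀ f : X → ℝ, Continuous f → ∃ (a : W) (c : ℝ), ∀ x ∉ hT.seq a, f x = c := by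
  intro f hf
  by_cases hX : hT.Bdd (univ : Set X)
  · obtain ⟨a, ha⟩ := hX
    exact ⟨a, 0, fun x hx => absurd (ha (mem_univ x)) hx⟩
  -- the set of "accumulation values"
  set A : Set ℝ := {z : ℝ | ∀ ε > 0, ¬ hT.Bdd (f ⁻¹' Metric.ball z ε)} with hA
  -- A is nonempty
  have hAne : A.Nonempty := by
    by_contra hne
    rw [not_nonempty_iff_eq_empty, eq_empty_iff_forall_notMem] at hne
    have : hT.Bdd (f ⁻¹' univ) := by
      apply myaux_cover hT f
      intro w _
      have := hne w
      simp only [hA, mem_setOf_eq, not_forall, exists_prop] at this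
      obtain ⟨ε, hε, h⟩ := this
      exact ⟨ε, hε, not_not.mp h⟩
    rw [preimage_univ] at this
    exact hX this
  obtain ⟨z, hz'⟩ := hAne
  -- A is a singleton {z}
  have huniq : ∀ w ∈ A, w = z := by
    intro w hw
    by_contra hwz
    set r : ℝ := dist w z / 3 with hr
    have hrpos : 0 < r := by
      have : 0 < dist w z := dist_pos.2 hwz
      positivity
    -- two disjoint unbounded zero sets
    set g₁ : X → ℝ := fun x => max (dist (f x) w - r) 0 with hg₁
    set g₂ : X → ℝ := fun x => max (dist (f x) z - r) 0 with hg₂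
    have hc₁ : Continuous g₁ := ((hf.dist continuous_const).sub continuous_const).max
      continuous_const
    have hc₂ : Continuous g₂ := ((hf.dist continuous_const).sub continuous_const).max
      continuous_const
    have hzero : ∀ (c : ℝ) (x : X),
        (fun x => max (dist (f x) c - r) 0) x = 0 ↔ dist (f x) c ≤ r := by
      intro c x
      simp only [max_eq_right_iff, sub_nonpos]
    have hub₁ : ¬ hT.Bdd (g₁ ⁻¹' {0}) := by
      intro hb
      apply hw r hrpos
      apply myaux_bdd_mono hT _ hb
      intro x hx
      simp only [mem_preimage, mem_singleton_iff, hg₁, hzero]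
      exact le_of_lt hx
    have hub₂ : ¬ hT.Bdd (g₂ ⁻¹' {0}) := by
      intro hb
      apply hz' r hrpos
      apply myaux_bdd_mono hT _ hb
      intro x hx
      simp only [mem_preimage, mem_singleton_iff, hg₂, hzero]
      exact le_of_lt hx
    have hclub := hz g₁ g₂ hc₁ hc₂ hub₁ hub₂
    apply hclub.2
    have : g₁ ⁻¹' {0} ∩ g₂ ⁻¹' {0} = ∅ := by
      rw [eq_empty_iff_forall_notMem]
      rintro x ⟨hx₁, hx₂⟩
      simp only [mem_preimage, mem_singleton_iff, hg₁, hg₂, hzero] at hx₁ hx₂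
      have : dist w z ≤ dist w (f x) + dist (f x) z := dist_triangle _ _ _
      rw [dist_comm w (f x)] at this
      have h3 : dist w z ≤ 2 * r := by linarith
      rw [hr] at h3
      nlinarith [dist_pos.2 hwz]
    rw [this]
    exact ⟨w0, empty_subset _⟩
  -- preimages of complements of small balls around z are bounded
  have hbddF : ∀ n : ℕ, hT.Bdd (f ⁻¹' {y : ℝ | 1 / (n + 1 : ℝ) ≤ dist y z}) := by
    intro n
    apply myaux_cover hT f
    intro w hw
    have hwz : w ≠ z := by
      intro h
      simp only [mem_setOf_eq] at hw
      rw [h, dist_self] at hw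
      have : (0 : ℝ) < 1 / (n + 1 : ℝ) := by positivity
      linarith
    have hwA : w ∉ A := fun h => hwz (huniq w h)
    simp only [hA, mem_setOf_eq, not_forall, exists_prop] at hwA
    obtain ⟨ε, hε, h⟩ := hwA
    exact ⟨ε, hε, not_not.mp h⟩
  choose a ha using hbddF
  obtain ⟨b, hb⟩ := myaux_exists_ub a
  refine ⟨b, z, fun x hx => ?_⟩
  by_contra hne
  obtain ⟨n, hn⟩ := exists_nat_one_div_lt (dist_pos.2 hne)
  have hxF : x ∈ f ⁻¹' {y : ℝ | 1 / (n + 1 : ℝ) ≤ dist y z} := le_of_lt hn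
  have : x ∈ hT.seq b :=
    subset_closure.trans (hT.mono _ _ (hb n)) (ha n hxF)
  exact hx this

end
end

section
/- Let X be a regular Type I space such that any two closed unbounded subsets have closed unbounded intersection. Then X is ω₁-compact and normal. -/
open Set Topology

noncomputable section

universe u

variable {X : Type u} [TopologicalSpace X]

section Aux17

variable {X : Type u} [TopologicalSpace X]

/-- A subset of a closed discrete set is closed. -/
lemma aux17_closed_of_subset {C S : Set X} (hC : IsClosed C) (hd : DiscreteTopology C)
    (hS : S ⊆ C) : IsClosed S := by
  rw [← isOpen_compl_iff, isOpen_iff_mem_nhds]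
  intro y hy
  by_cases hyC : y ∈ C
  · obtain ⟨U, hUo, hU⟩ := isOpen_induced_iff.mp (isOpen_discrete ({⟨y, hyC⟩} : Set C))
    refine Filter.mem_of_superset (hUo.mem_nhds ?_) ?_
    · have : (⟨y, hyC⟩ : C) ∈ Subtype.val ⁻¹' U := hU ▸ rfl
      exact this
    · intro z hz hzS
      have : (⟨z, hS hzS⟩ : C) ∈ Subtype.val ⁻¹' U := hz
      rw [hU] at this
      have : z = y := congrArg Subtype.val this
      exact hy (this ▸ hzS)
  · exact Filter.mem_of_superset (hC.isOpen_compl.mem_nhds hyC)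
      fun z hz hzS => hz (hC.closure_subset_iff.mpr hS <| subset_closure hzS)

lemma aux17_countable {C K : Set X} (hC : IsClosed C) (hd : DiscreteTopology C)
    (hK : IsLindelof K) (hCK : C ⊆ K) : C.Countable :=
  (hK.of_isClosed_subset hC hCK).countable hd

/-- An uncountable closed discrete set is unbounded. -/
lemma aux17_unbdd (hT : TypeI X) {C : Set X} (hC : IsClosed C) (hd : DiscreteTopology C)
    (hcnt : ¬ C.Countable) : ¬ hT.Bdd C := by
  rintro ⟨a, ha⟩
  exact hcnt (aux17_countable hC hd (hT.lindelof a) (ha.trans subset_closure))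

/-- Split an uncountable set into two uncountable pieces. -/
lemma aux17_split {C : Set X} (h : ¬ C.Countable) :
    ∃ S : Set X, S ⊆ C ∧ ¬ S.Countable ∧ ¬ (C \ S).Countable := by
  haveI : Uncountable ↥C := not_countable_iff.mp (fun hc => h (Set.countable_coe_iff.mpr hc))
  have hcard : Cardinal.mk (↥C ⊕ ↥C) = Cardinal.mk ↥C := by
    rw [Cardinal.mk_sum]; simp only [Cardinal.lift_id]
    exact Cardinal.add_eq_self Cardinal.aleph0_lt_mk.le
  obtain ⟨e⟩ := Cardinal.eq.mp hcard
  set S : Set X := Subtype.val '' (⇑e '' Set.range Sum.inl) with hSdef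
  have hSsub : S ⊆ C := by rintro x ⟨y, _, rfl⟩; exact y.2
  have hnotS : ∀ x : ↥C, (↑(e (Sum.inr x)) : X) ∉ S := by
    rintro x ⟨y, hy, hyx⟩
    have : y = e (Sum.inr x) := Subtype.val_injective hyx
    subst this
    obtain ⟨z, ⟨w, rfl⟩, hz⟩ := hy
    exact Sum.inl_ne_inr (e.injective hz)
  refine ⟨S, hSsub, ?_, ?_⟩
  · intro hc
    have hf : Function.Injective (fun x : ↥C => (↑(e (Sum.inl x)) : X)) :=
      Subtype.val_injective.comp (e.injective.comp Sum.inl_injective)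
    have : ((fun x : ↥C => (↑(e (Sum.inl x)) : X)) ⁻¹' S).Countable := hc.preimage hf
    have huniv : ((fun x : ↥C => (↑(e (Sum.inl x)) : X)) ⁻¹' S) = Set.univ := by
      ext x; simp only [Set.mem_preimage, Set.mem_univ, iff_true]
      exact Set.mem_image_of_mem _ (Set.mem_image_of_mem _ (Set.mem_range_self _))
    rw [huniv, Set.countable_univ_iff] at this
    exact h (Set.countable_coe_iff.mpr this)
  · intro hc
    have hf : Function.Injective (fun x : ↥C => (↑(e (Sum.inr x)) : X)) :=
      Subtype.val_injective.comp (e.injective.comp Sum.inr_injective)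
    have : ((fun x : ↥C => (↑(e (Sum.inr x)) : X)) ⁻¹' (C \ S)).Countable := hc.preimage hf
    have huniv : ((fun x : ↥C => (↑(e (Sum.inr x)) : X)) ⁻¹' (C \ S)) = Set.univ := by
      ext x; simp only [Set.mem_preimage, Set.mem_univ, iff_true]
      exact ⟨(e (Sum.inr x)).2, hnotS x⟩
    rw [huniv, Set.countable_univ_iff] at this
    exact h (Set.countable_coe_iff.mpr this)

lemma aux17_sep [RegularSpace X] (hT : TypeI X) {s t : Set X} (hs : IsClosed s)
    (ht : IsClosed t) (hd : Disjoint s t) {a : W} (hbdd : s ⊆ hT.seq a) :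
    SeparatedNhds s t := by
  have hab : a < Wsucc a := by
    have : a.1 < (Wsucc a).1 := Order.lt_succ a.1
    exact this
  have hsb : s ⊆ hT.seq (Wsucc a) := fun x hx => hT.mono a _ hab (subset_closure (hbdd hx))
  set K := closure (hT.seq (Wsucc a)) with hK
  haveI : LindelofSpace ↥K := isLindelof_iff_LindelofSpace.mp (hT.lindelof _)
  have h1 : IsClosed (Subtype.val ⁻¹' s : Set ↥K) := hs.preimage continuous_subtype_val
  have h2 : IsClosed (Subtype.val ⁻¹' t : Set ↥K) := ht.preimage continuous_subtype_val
  obtain ⟨u, v, huo, hvo, hsu, htv, huv⟩ :=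
    NormalSpace.normal _ _ h1 h2 (hd.preimage _)
  obtain ⟨U, hUo, hU⟩ := isOpen_induced_iff.mp huo
  obtain ⟨V, hVo, hV⟩ := isOpen_induced_iff.mp hvo
  refine ⟨U ∩ hT.seq (Wsucc a), V ∪ Kᶜ, hUo.inter (hT.isOpen _),
    hVo.union isClosed_closure.isOpen_compl, ?_, ?_, ?_⟩
  · intro x hx
    have hxb : x ∈ hT.seq (Wsucc a) := hsb hx
    have hxK : x ∈ K := subset_closure hxb
    have : (⟨x, hxK⟩ : ↥K) ∈ u := hsu hx
    rw [← hU] at this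
    exact ⟨this, hxb⟩
  · intro x hx
    by_cases hxK : x ∈ K
    · have : (⟨x, hxK⟩ : ↥K) ∈ v := htv hx
      rw [← hV] at this
      exact Or.inl this
    · exact Or.inr hxK
  · rw [Set.disjoint_left]
    rintro x ⟨hxU, hxb⟩ hxV
    have hxK : x ∈ K := subset_closure hxb
    rcases hxV with hxV | hxV
    · have h1 : (⟨x, hxK⟩ : ↥K) ∈ u := by rw [← hU]; exact hxU
      have h2 : (⟨x, hxK⟩ : ↥K) ∈ v := by rw [← hV]; exact hxV
      exact Set.disjoint_left.mp huv h1 h2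
    · exact hxV hxK

end Aux17

/-- A regular Type I space in which any two clubs have club intersection is
ω₁-compact and normal. -/
theorem stmt_17 {X : Type u} [TopologicalSpace X] [T2Space X] [RegularSpace X]
    (hT : TypeI X)
    (hb : ∀ A B : Set X, hT.Club A → hT.Club B → hT.Club (A ∩ B)) :
    Omega1Compact X ∧ NormalSpace X := by
  constructor
  · intro C hCcl hCd
    by_contra h
    obtain ⟨S, hSsub, hSc, hTc⟩ := aux17_split h
    have hScl : IsClosed S := aux17_closed_of_subset hCcl hCd hSsub
    have hTcl : IsClosed (C \ S) := aux17_closed_of_subset hCcl hCd Set.diff_subset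
    haveI hSd : DiscreteTopology ↥S := DiscreteTopology.of_subset hCd hSsub
    haveI hTd : DiscreteTopology ↥(C \ S) := DiscreteTopology.of_subset hCd Set.diff_subset
    have hclub := hb S (C \ S) ⟨hScl, aux17_unbdd hT hScl hSd hSc⟩
      ⟨hTcl, aux17_unbdd hT hTcl hTd hTc⟩
    rw [Set.inter_diff_self] at hclub
    exact hclub.2 ⟨w0, Set.empty_subset _⟩
  · refine ⟨fun s t hs ht hd => ?_⟩
    by_cases hbs : hT.Bdd s
    · obtain ⟨a, ha⟩ := hbs
      exact aux17_sep hT hs ht hd ha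
    by_cases hbt : hT.Bdd t
    · obtain ⟨a, ha⟩ := hbt
      exact (aux17_sep hT ht hs hd.symm ha).symm
    have hclub := hb s t ⟨hs, hbs⟩ ⟨ht, hbt⟩
    rw [Set.disjoint_iff_inter_eq_empty.mp hd] at hclub
    exact absurd ⟨w0, Set.empty_subset _⟩ hclub.2

end
end
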